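/- Let T be a tree on n ≥ 2 vertices. Then for any starting vertices u (cop) and v (robber) in the cop-and-drunk game on T, there is a cop strategy (the greedy strategy, which at each step moves along the unique path toward the robber's current position) whose expected capture time is at most n. -/

import Mathlib

open scoped Classical ENNReal

/-! ## The cop-and-drunk game

A cop starts at `u`, a robber at `v`.  In each move the cop steps to an adjacent vertex
(seeing everything), then the robber steps to a uniformly random adjacent vertex.
A cop strategy is a function assigning to each finite history of play (equivalently, to the
finite sequence of robber positions observed so far, which together with the strategy itself
determines the whole history) the cop's next vertex.  Capture occurs the first time the two
players occupy the same vertex, whether after the cop's step or after the robber's step, and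
the capture time is the index of that move.  The expected capture time is computed as
`∑_{k≥0} P(T > k)` in `ℝ≥0∞`, where the probability of a robber trajectory is the product of
the transition weights `1/deg` of the simple random walk (so non-walk trajectories get
weight `0`). -/

/-- The cop's position after move `k`, given strategy `σ`, starting vertex `u`, and the
robber's trajectory `r` (the strategy sees the history `r 0, …, r (k-1)`). -/
def copPos {V : Type} (σ : List V → V) (u : V) (r : ℕ → V) : ℕ → V
  | 0 => u
  | k + 1 => σ (List.ofFn fun i : Fin (k + 1) => r i)

/-- A strategy is valid for `G` if the cop always moves from her current vertex to an
adjacent vertex. -/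
def ValidStrategy {V : Type} (G : SimpleGraph V) (σ : List V → V) (u : V) : Prop :=
  ∀ (r : ℕ → V) (k : ℕ), G.Adj (copPos σ u r k) (copPos σ u r (k + 1))

/-- The robber following trajectory `r` has been captured by the end of move `k`
(including capture at time `0` in case the two players start on the same vertex):
at some move `j ≤ k`, either the cop stepped onto the robber's current vertex, or the
robber stepped onto the cop's vertex. -/
def CapturedBy {V : Type} (σ : List V → V) (u : V) (r : ℕ → V) (k : ℕ) : Prop :=
  r 0 = u ∨ ∃ j, 1 ≤ j ∧ j ≤ k ∧ (copPos σ u r j = r (j - 1) ∨ copPos σ u r j = r j)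

/-- Probability weight of the first `k` steps of the trajectory `r` for the simple random
walk on `G`: the product of `1/deg` over the steps, and `0` if some step is not an edge. -/
noncomputable def pathWt {V : Type} [Fintype V] (G : SimpleGraph V) (r : ℕ → V) (k : ℕ) :
    ℝ≥0∞ :=
  ∏ i ∈ Finset.range k, if G.Adj (r i) (r (i + 1)) then ((G.degree (r i) : ℝ≥0∞))⁻¹ else 0

/-- Extend a finite trajectory to an infinite one (constant after time `k`). -/
def pad {V : Type} (k : ℕ) (q : Fin (k + 1) → V) : ℕ → V :=
  fun i => q ⟨min i k, Nat.lt_succ_of_le (Nat.min_le_right i k)⟩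

/-- The probability that the robber, starting at `v` and performing a simple random walk on
`G`, survives (is not yet captured) through the end of move `k`, against the cop playing
strategy `σ` from `u`. -/
noncomputable def survival {V : Type} [Fintype V] (G : SimpleGraph V) (σ : List V → V)
    (u v : V) (k : ℕ) : ℝ≥0∞ :=
  ∑ q : Fin (k + 1) → V,
    if q 0 = v ∧ ¬ CapturedBy σ u (pad k q) k then pathWt G (pad k q) k else 0

/-- The expected capture time `E[T] = ∑_{k ≥ 0} P(T > k)` of the cop-and-drunk game on `G`,
with the cop starting at `u` playing strategy `σ` and the robber starting at `v`. -/
noncomputable def expCaptureTime {V : Type} [Fintype V] (G : SimpleGraph V) (σ : List V → V)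
    (u v : V) : ℝ≥0∞ :=
  ∑' k : ℕ, survival G σ u v k

/-!
The greedy cop, who always steps towards the robber's current vertex, captures every walk of the
robber on a tree within `n - 1` moves, so `P(T > k) = 0` for `k ≥ n - 1` and `E[T] ≤ n - 1`.
The potential is the robber's territory: the vertices `x` such that the cop is not on the
geodesic from `x` to the robber. It has at most `n - 1` vertices and contains the robber while he
is free. After a greedy step of the cop and any step of the robber, the new territory lies in the
old one minus the cop's new vertex: on a tree, a robber stepping towards `x` also steps towards
the cop's new vertex whenever that vertex is between `x` and his old position.
-/

open Finset

section Play

variable {V : Type} {σ : List V → V} {u : V} {r : ℕ → V} {k : ℕ}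

lemma copPos_ne_of_not_capturedBy (h : ¬CapturedBy σ u r k) {j : ℕ} (hj : j ≤ k) :
    copPos σ u r j ≠ r j := by
  simp only [CapturedBy, not_or, not_exists, not_and] at h
  cases j with
  | zero => exact Ne.symm h.1
  | succ j => exact (h.2 (j + 1) (by omega) hj).2

lemma copPos_succ_ne_of_not_capturedBy (h : ¬CapturedBy σ u r k) {j : ℕ} (hj : j < k) :
    copPos σ u r (j + 1) ≠ r j := by
  simp only [CapturedBy, not_or, not_exists, not_and] at h
  exact (h.2 (j + 1) (by omega) hj).1

lemma pad_of_le {k i : ℕ} (q : Fin (k + 1) → V) (h : i ≤ k) :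
    pad k q i = q ⟨i, Nat.lt_succ_of_le h⟩ :=
  congrArg q (Fin.ext (Nat.min_eq_left h))

end Play

namespace SimpleGraph

variable {V : Type} {G : SimpleGraph V}

lemma Reachable.exists_adj_dist_add_one_eq {c t : V} (hct : G.Reachable c t) (h : c ≠ t) :
    ∃ c', G.Adj c c' ∧ G.dist t c' + 1 = G.dist t c := by
  obtain ⟨p, hp⟩ := exists_walk_of_dist_ne_zero (hct.pos_dist_of_ne h).ne'
  cases p with
  | nil => exact absurd rfl h
  | @cons _ c' _ hadj q =>
    have hq := dist_le q
    have htri := hadj.reachable.dist_triangle_left t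
    rw [dist_eq_one_iff_adj.2 hadj] at htri
    rw [Walk.length_cons] at hp
    exact ⟨c', hadj, by rw [dist_comm (u := t), dist_comm (u := t)]; omega⟩

lemma IsAcyclic.mem_support_of_adj_of_dist_lt (hG : G.IsAcyclic) {x a b : V} {q : G.Walk x a}
    (hq : q.IsPath) (hab : G.Adj a b) (hd : G.dist x b < G.dist x a) : b ∈ q.support := by
  by_contra hb
  obtain ⟨p, hp, hpl⟩ := (q.reachable.trans hab.reachable).exists_path_of_dist
  have hpq : p = q.concat hab :=
    congrArg Subtype.val ((hG.subsingleton_path x b).elim ⟨p, hp⟩ ⟨_, hq.concat hb hab⟩)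
  have := dist_le q
  rw [hpq, Walk.length_concat] at hpl
  omega

lemma IsAcyclic.eq_of_adj_of_dist_lt (hG : G.IsAcyclic) {x a a₁ a₂ : V} (h₁ : G.Adj a a₁)
    (h₂ : G.Adj a a₂) (d₁ : G.dist x a₁ < G.dist x a) (d₂ : G.dist x a₂ < G.dist x a) :
    a₁ = a₂ := by
  obtain ⟨q, hq, -⟩ := (Reachable.of_dist_ne_zero (by omega : G.dist x a ≠ 0)).exists_path_of_dist
  rw [hG.eq_penultimate_of_adj_end hq h₁ (hG.mem_support_of_adj_of_dist_lt hq h₁ d₁),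
    hG.eq_penultimate_of_adj_end hq h₂ (hG.mem_support_of_adj_of_dist_lt hq h₂ d₂)]

lemma IsAcyclic.dist_lt_of_adj_of_dist_lt (hG : G.IsAcyclic) (hconn : G.Connected)
    {x a a' b : V} (ha' : G.Adj a a') (hd : G.dist x a' < G.dist x a)
    (hb : G.dist x b + G.dist b a = G.dist x a) (hba : b ≠ a) : G.dist b a' < G.dist b a := by
  obtain ⟨a'', ha'', hd''⟩ := (hconn a b).exists_adj_dist_add_one_eq hba.symm
  have htri := hconn.dist_triangle (u := x) (v := b) (w := a'')
  rw [hG.eq_of_adj_of_dist_lt ha' ha'' hd (by omega)]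
  omega

section Territory

variable [Fintype V]

variable (G) in
noncomputable def territory (c r : V) : Finset V :=
  {x | G.dist x r < G.dist x c + G.dist c r}

lemma mem_territory_self (hconn : G.Connected) {c r : V} (h : c ≠ r) : r ∈ G.territory c r := by
  have := hconn.pos_dist_of_ne h
  simp only [territory, mem_filter, mem_univ, true_and, dist_self]
  omega

lemma card_territory_le (c r : V) : #(G.territory c r) ≤ Fintype.card V - 1 := by
  have hsub : G.territory c r ⊆ univ.erase c := fun x hx => by
    simp only [territory, mem_filter, mem_univ, true_and] at hx
    simp only [mem_erase, mem_univ, and_true]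
    rintro rfl
    simp at hx
  simpa using card_le_card hsub

lemma territory_subset_erase (hG : G.IsAcyclic) (hconn : G.Connected) {c c' r r' : V}
    (hc : G.Adj c c') (hstep : G.dist r c' + 1 = G.dist r c) (hc'r : c' ≠ r) (hr : G.Adj r r') :
    G.territory c' r' ⊆ (G.territory c r).erase c' := by
  intro x hx
  simp only [territory, mem_erase, mem_filter, mem_univ, true_and] at hx ⊢
  refine ⟨by rintro rfl; simp at hx, ?_⟩
  by_contra! hcx
  have hcc' := hconn.dist_triangle (u := x) (v := c) (w := c')
  have hxc'r := hconn.dist_triangle (u := x) (v := c') (w := r)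
  rw [dist_eq_one_iff_adj.2 hc] at hcc'
  rw [dist_comm (u := r), dist_comm (u := r)] at hstep
  -- since `c` lies on the geodesic from `x` to `r`, so does the cop's new vertex `c'`
  have hgeod : G.dist x c' + G.dist c' r = G.dist x r := by omega
  rcases hG.dist_eq_dist_add_one_of_adj_of_reachable x hr (hconn x r) with hx' | hx'
  · have := hG.dist_lt_of_adj_of_dist_lt hconn hr (by omega) hgeod hc'r
    omega
  · have := hconn.dist_triangle (u := c') (v := r) (w := r')
    rw [dist_eq_one_iff_adj.2 hr] at this
    omega

lemma card_territory_lt (hG : G.IsAcyclic) (hconn : G.Connected) {c c' r r' : V}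
    (hc : G.Adj c c') (hstep : G.dist r c' + 1 = G.dist r c) (hc'r : c' ≠ r) (hr : G.Adj r r') :
    #(G.territory c' r') < #(G.territory c r) := by
  have hmem : c' ∈ G.territory c r := by
    simp only [territory, mem_filter, mem_univ, true_and, dist_comm (u := c') (v := c),
      dist_eq_one_iff_adj.2 hc]
    rw [dist_comm (u := r), dist_comm (u := r)] at hstep
    omega
  exact card_lt_card
    ((territory_subset_erase hG hconn hc hstep hc'r hr).trans_ssubset (erase_ssubset hmem))

end Territory

variable (G) in
/-- For `c = t` any neighbour will do; the fallback `c` is reached only at isolated vertices. -/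
noncomputable def greedyStep (c t : V) : V :=
  if h : ∃ c', G.Adj c c' ∧ (c ≠ t → G.dist t c' + 1 = G.dist t c) then h.choose else c

variable (G) in
noncomputable def greedy (u : V) : List V → V :=
  List.foldl G.greedyStep u

lemma greedyStep_spec [Nontrivial V] (hconn : G.Connected) (c t : V) :
    G.Adj c (G.greedyStep c t) ∧ (c ≠ t → G.dist t (G.greedyStep c t) + 1 = G.dist t c) := by
  have hex : ∃ c', G.Adj c c' ∧ (c ≠ t → G.dist t c' + 1 = G.dist t c) := by
    by_cases h : c = t
    · obtain ⟨c', hc'⟩ := hconn.preconnected.exists_adj_of_nontrivial c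
      exact ⟨c', hc', fun h' => absurd h h'⟩
    · obtain ⟨c', hc', hd⟩ := (hconn c t).exists_adj_dist_add_one_eq h
      exact ⟨c', hc', fun _ => hd⟩
  rw [greedyStep, dif_pos hex]
  exact hex.choose_spec

lemma copPos_greedy_succ (u : V) (r : ℕ → V) (k : ℕ) :
    copPos (G.greedy u) u r (k + 1) = G.greedyStep (copPos (G.greedy u) u r k) (r k) := by
  cases k with
  | zero => rfl
  | succ k =>
    simp only [copPos, greedy, List.ofFn_succ' (n := k + 1), List.concat_eq_append,
      List.foldl_append, List.foldl_cons, List.foldl_nil]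
    rfl

lemma greedy_validStrategy [Nontrivial V] (hconn : G.Connected) (u : V) :
    ValidStrategy G (G.greedy u) u := fun r k => by
  rw [copPos_greedy_succ]
  exact (greedyStep_spec hconn _ _).1

variable [Fintype V] [Nontrivial V] {r : ℕ → V} {k : ℕ} {u : V}

lemma card_territory_greedy_add_le (hG : G.IsAcyclic) (hconn : G.Connected)
    (hwalk : ∀ i < k, G.Adj (r i) (r (i + 1))) (hfree : ¬CapturedBy (G.greedy u) u r k) :
    ∀ j ≤ k, #(G.territory (copPos (G.greedy u) u r j) (r j)) + j ≤ Fintype.card V - 1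
  | 0, _ => G.card_territory_le _ _
  | j + 1, hj => by
    have ih := card_territory_greedy_add_le hG hconn hwalk hfree j (by omega)
    have hfree' := copPos_succ_ne_of_not_capturedBy hfree hj
    rw [copPos_greedy_succ] at hfree' ⊢
    obtain ⟨hadj, hstep⟩ := greedyStep_spec hconn (copPos (G.greedy u) u r j) (r j)
    have := card_territory_lt hG hconn hadj
      (hstep (copPos_ne_of_not_capturedBy hfree (by omega))) hfree' (hwalk j hj)
    omega

theorem capturedBy_greedy (hG : G.IsAcyclic) (hconn : G.Connected)
    (hk : Fintype.card V - 1 ≤ k) (hwalk : ∀ i < k, G.Adj (r i) (r (i + 1))) :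
    CapturedBy (G.greedy u) u r k := by
  by_contra hfree
  have hcard := card_territory_greedy_add_le hG hconn hwalk hfree k le_rfl
  have hpos := card_pos.2
    ⟨r k, G.mem_territory_self hconn (copPos_ne_of_not_capturedBy hfree le_rfl)⟩
  omega

end SimpleGraph

section Probability

variable {V : Type} [Fintype V] (G : SimpleGraph V)

lemma sum_ite_adj_inv_degree_le_one (a : V) :
    ∑ b, (if G.Adj a b then ((G.degree a : ℝ≥0∞))⁻¹ else 0) ≤ 1 := by
  rw [sum_ite, sum_const_zero, add_zero, sum_const, nsmul_eq_mul]
  have : #(univ.filter (G.Adj a)) = G.degree a := by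
    rw [← G.card_neighborFinset_eq_degree]
    congr 1
    ext b
    simp
  rw [this]
  exact ENNReal.mul_inv_le_one _

lemma pathWt_pad_snoc (k : ℕ) (p : Fin (k + 1) → V) (y : V) :
    pathWt G (pad (k + 1) (Fin.snoc p y)) (k + 1) = pathWt G (pad k p) k *
      (if G.Adj (p (Fin.last k)) y then ((G.degree (p (Fin.last k)) : ℝ≥0∞))⁻¹ else 0) := by
  have hpad : ∀ i ≤ k, pad (k + 1) (Fin.snoc p y) i = pad k p i := fun i hi => by
    rw [pad_of_le _ (hi.trans k.le_succ), pad_of_le _ hi]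
    exact Fin.snoc_castSucc (α := fun _ => V) y p ⟨i, Nat.lt_succ_of_le hi⟩
  have hlast : pad (k + 1) (Fin.snoc p y) (k + 1) = y := by
    rw [pad_of_le _ le_rfl]
    exact Fin.snoc_last (α := fun _ => V) y p
  unfold pathWt
  rw [prod_range_succ, hpad k le_rfl, hlast, pad_of_le p le_rfl]
  congr 1
  exact prod_congr rfl fun i hi => by
    rw [mem_range] at hi
    rw [hpad i hi.le, hpad (i + 1) hi]

lemma sum_ite_pathWt_le_one (v : V) : ∀ k : ℕ,
    ∑ q : Fin (k + 1) → V, (if q 0 = v then pathWt G (pad k q) k else 0) ≤ 1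
  | 0 => by
    rw [← (Equiv.funUnique (Fin 1) V).symm.sum_comp]
    simp [pathWt]
  | k + 1 => by
    rw [← (Fin.snocEquiv fun _ => V).sum_comp, Fintype.sum_prod_type_right]
    calc ∑ p : Fin (k + 1) → V, ∑ y, (if (Fin.snoc p y : Fin (k + 2) → V) 0 = v then
          pathWt G (pad (k + 1) (Fin.snoc p y)) (k + 1) else 0)
        = ∑ p : Fin (k + 1) → V, (if p 0 = v then pathWt G (pad k p) k else 0) *
            ∑ y, (if G.Adj (p (Fin.last k)) y
              then ((G.degree (p (Fin.last k)) : ℝ≥0∞))⁻¹ else 0) := by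
          refine sum_congr rfl fun p _ => ?_
          rw [mul_sum]
          refine sum_congr rfl fun y _ => ?_
          rw [pathWt_pad_snoc, ite_mul, zero_mul]
          rfl
      _ ≤ ∑ p : Fin (k + 1) → V, (if p 0 = v then pathWt G (pad k p) k else 0) * 1 := by
          gcongr
          exact sum_ite_adj_inv_degree_le_one G _
      _ ≤ 1 := by simpa using sum_ite_pathWt_le_one v k

lemma survival_le_one (σ : List V → V) (u v : V) (k : ℕ) : survival G σ u v k ≤ 1 :=
  (sum_le_sum fun q _ => by split_ifs <;> simp_all).trans (sum_ite_pathWt_le_one G v k)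

lemma adj_of_pathWt_ne_zero {r : ℕ → V} {k : ℕ} (h : pathWt G r k ≠ 0) :
    ∀ i < k, G.Adj (r i) (r (i + 1)) := fun i hi => by
  by_contra hadj
  exact h (prod_eq_zero (mem_range.2 hi) (if_neg hadj))

lemma survival_eq_zero_of_capturedBy {σ : List V → V} {u : V} {k : ℕ}
    (h : ∀ r : ℕ → V, (∀ i < k, G.Adj (r i) (r (i + 1))) → CapturedBy σ u r k) (v : V) :
    survival G σ u v k = 0 :=
  sum_eq_zero fun q _ => ite_eq_right_iff.2 fun hsurv => by
    by_contra hq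
    exact hsurv.2 (h _ (adj_of_pathWt_ne_zero G hq))

lemma expCaptureTime_le_of_survival_eq_zero {σ : List V → V} {u v : V} {m : ℕ}
    (h : ∀ k, m ≤ k → survival G σ u v k = 0) : expCaptureTime G σ u v ≤ m := by
  rw [expCaptureTime, tsum_eq_sum (s := range m) fun k hk => h k (by simpa using hk)]
  calc ∑ k ∈ range m, survival G σ u v k ≤ ∑ _k ∈ range m, 1 :=
        sum_le_sum fun k _ => survival_le_one G σ u v k
    _ = m := by simp

end Probability

/-- On a tree on `n ≥ 2` vertices, for any starting vertices `u` (cop) and `v` (robber),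
there is a valid cop strategy (the greedy one) whose expected capture time is at most `n`. -/
theorem tree_expected_capture_time_le {V : Type} [Fintype V] (G : SimpleGraph V) (n : ℕ)
    (hn : 2 ≤ n) (hcard : Fintype.card V = n) (hconn : G.Connected) (hacyc : G.IsAcyclic)
    (u v : V) :
    ∃ σ : List V → V, ValidStrategy G σ u ∧ expCaptureTime G σ u v ≤ (n : ℝ≥0∞) := by
  have : Nontrivial V := Fintype.one_lt_card_iff_nontrivial.1 (by omega)
  refine ⟨G.greedy u, G.greedy_validStrategy hconn u, ?_⟩
  calc expCaptureTime G (G.greedy u) u v ≤ (Fintype.card V - 1 : ℕ) :=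
        expCaptureTime_le_of_survival_eq_zero G fun k hk =>
          survival_eq_zero_of_capturedBy G (fun _ hr => G.capturedBy_greedy hacyc hconn hk hr) v
    _ ≤ n := by
        gcongr
        omega
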